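/- arXiv:math/0512358 — 4 statements merged into one kernel-verified Lean document; each statement's English description precedes it below -/
import Mathlib

section
/- Let (x_n)_{n≥0} be a sequence of real numbers with x_0 = 0, x_n > 0 for n ≥ 1, satisfying x_n(x_{n+1} + x_n + x_{n-1}) = n + ρΔ_n for all n ≥ 1, where ρ > -1 and Δ_n = (1-(-1)^n)/2. Then lim_{n→∞} x_n/√n = 1/√3. -/
/-!
Put `cₙ = xₙ / √n`. Dividing the equation by `n` gives
`cₙ (αₙ cₙ₋₁ + cₙ + βₙ cₙ₊₁) = 1 + O(1/n)` with `αₙ = √(n-1)/√n → 1` and `βₙ = √(n+1)/√n → 1`;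
in particular `cₙ² ≤ 1 + O(1/n)`, so `c` is bounded and `cₙ (cₙ₋₁ + cₙ + cₙ₊₁) → 1`.
With `I = liminf c` and `S = limsup c`, looking at indices where `cₙ` is close to `I`
(resp. `S`) while its neighbours are eventually below `S` (resp. above `I`) gives
`1 ≤ I (I + 2S)` and `S (S + 2I) ≤ 1`. Hence `S² ≤ I²`, so `S = I` and `3 S² = 1`.
-/

open Filter Topology

theorem tendsto_natCast_add_div_self {g : ℕ → ℝ} (hg : IsBoundedUnder (· ≤ ·) atTop (norm ∘ g)) :
    Tendsto (fun n : ℕ ↦ (n + g n) / n) atTop (𝓝 1) := by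
  have := (tendsto_one_div_atTop_nhds_zero_nat.zero_mul_isBoundedUnder_le hg).const_add 1
  rw [add_zero] at this
  refine this.congr' ?_
  filter_upwards [eventually_ge_atTop 1] with n hn
  have : (n : ℝ) ≠ 0 := by positivity
  field_simp

theorem tendsto_sqrt_add_div_sqrt (t : ℝ) : Tendsto (fun n : ℕ ↦ √(n + t) / √n) atTop (𝓝 1) := by
  have := (tendsto_natCast_add_div_self (g := fun _ ↦ t) isBoundedUnder_const).sqrt
  rw [Real.sqrt_one] at this
  exact this.congr fun n ↦ Real.sqrt_div' _ n.cast_nonneg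

section NeighbourProduct

variable {c : ℕ → ℝ} {L : ℝ}

theorem tendsto_mul_neighbours_of_weighted {α β : ℕ → ℝ}
    (hc : IsBoundedUnder (· ≤ ·) atTop (norm ∘ c))
    (hα : Tendsto α atTop (𝓝 1)) (hβ : Tendsto β atTop (𝓝 1))
    (h : Tendsto (fun n ↦ c n * (α n * c (n - 1) + c n + β n * c (n + 1))) atTop (𝓝 L)) :
    Tendsto (fun n ↦ c n * (c (n - 1) + c n + c (n + 1))) atTop (𝓝 L) := by
  have hα' : Tendsto (fun n ↦ 1 - α n) atTop (𝓝 0) := by simpa using hα.const_sub 1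
  have hβ' : Tendsto (fun n ↦ 1 - β n) atTop (𝓝 0) := by simpa using hβ.const_sub 1
  have herr : Tendsto (fun n ↦ c n * ((1 - α n) * c (n - 1) + (1 - β n) * c (n + 1)))
      atTop (𝓝 0) := by
    refine isBoundedUnder_le_mul_tendsto_zero hc ?_
    simpa using
      (hα'.zero_mul_isBoundedUnder_le ((tendsto_sub_atTop_nat 1).isBoundedUnder_comp hc)).add
        (hβ'.zero_mul_isBoundedUnder_le ((tendsto_add_atTop_nat 1).isBoundedUnder_comp hc))
  simpa using (h.add herr).congr fun n ↦ by ring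

theorem le_mul_of_liminf_lt_of_limsup_lt (hc : ∀ n, 0 ≤ c n)
    (hbdd : IsBoundedUnder (· ≤ ·) atTop c)
    (hL : Tendsto (fun n ↦ c n * (c (n - 1) + c n + c (n + 1))) atTop (𝓝 L)) {a b : ℝ}
    (ha : liminf c atTop < a) (hb : limsup c atTop < b) : L ≤ a * (a + 2 * b) := by
  have hlt : ∀ᶠ n in atTop, c n < b := eventually_lt_of_limsup_lt hb hbdd
  have hnbrs : ∀ᶠ n in atTop, c (n - 1) < b ∧ c (n + 1) < b :=
    ((tendsto_sub_atTop_nat 1).eventually hlt).and ((tendsto_add_atTop_nat 1).eventually hlt)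
  refine le_of_tendsto_of_frequently hL ?_
  refine ((frequently_lt_of_liminf_lt hbdd.isCoboundedUnder_ge ha).and_eventually hnbrs).mono ?_
  rintro n ⟨hn, hprev, hnext⟩
  have := hc n; have := hc (n - 1); have := hc (n + 1)
  exact mul_le_mul hn.le (by linarith) (by positivity) (by linarith)

theorem mul_le_of_lt_limsup_of_lt_liminf (hc : ∀ n, 0 ≤ c n)
    (hL : Tendsto (fun n ↦ c n * (c (n - 1) + c n + c (n + 1))) atTop (𝓝 L)) {a b : ℝ}
    (ha₀ : 0 ≤ a) (ha : a < limsup c atTop) (hb : b < liminf c atTop) : a * (a + 2 * b) ≤ L := by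
  have hbdd : IsBoundedUnder (· ≥ ·) atTop c := isBoundedUnder_of ⟨0, hc⟩
  have hlt : ∀ᶠ n in atTop, b < c n := eventually_lt_of_lt_liminf hb hbdd
  have hnbrs : ∀ᶠ n in atTop, b < c (n - 1) ∧ b < c (n + 1) :=
    ((tendsto_sub_atTop_nat 1).eventually hlt).and ((tendsto_add_atTop_nat 1).eventually hlt)
  refine ge_of_tendsto_of_frequently hL ?_
  refine ((frequently_lt_of_lt_limsup hbdd.isCoboundedUnder_le ha).and_eventually hnbrs).mono ?_
  rintro n ⟨hn, hprev, hnext⟩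
  have := hc n; have := hc (n - 1); have := hc (n + 1)
  calc a * (a + 2 * b) ≤ a * (c (n - 1) + c n + c (n + 1)) :=
        mul_le_mul_of_nonneg_left (by linarith) ha₀
    _ ≤ c n * (c (n - 1) + c n + c (n + 1)) := by gcongr

theorem tendsto_sqrt_div_three_of_mul_neighbours (hc : ∀ n, 0 ≤ c n)
    (hbdd : IsBoundedUnder (· ≤ ·) atTop c) (hL₀ : 0 < L)
    (hL : Tendsto (fun n ↦ c n * (c (n - 1) + c n + c (n + 1))) atTop (𝓝 L)) :
    Tendsto c atTop (𝓝 √(L / 3)) := by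
  set I := liminf c atTop
  set S := limsup c atTop
  have hbdd' : IsBoundedUnder (· ≥ ·) atTop c := isBoundedUnder_of ⟨0, hc⟩
  have hI₀ : 0 ≤ I := le_liminf_of_le hbdd.isCoboundedUnder_ge (.of_forall hc)
  have hIS : I ≤ S := liminf_le_limsup hbdd hbdd'
  have hlow : L ≤ I * (I + 2 * S) := by
    have := ContinuousWithinAt.closure_le (s := Set.Ioi 0) (x := 0) (by simp)
      continuousWithinAt_const
      (by fun_prop : Continuous fun ε ↦ (I + ε) * (I + ε + 2 * (S + ε))).continuousWithinAt
      fun ε (hε : 0 < ε) ↦ le_mul_of_liminf_lt_of_limsup_lt hc hbdd hL (by linarith) (by linarith)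
    simpa using this
  have hS₀ : 0 < S := by
    by_contra! h
    nlinarith
  have hup : S * (S + 2 * I) ≤ L := by
    have := ContinuousWithinAt.closure_le (s := Set.Ioo 0 S) (x := 0)
      (by rw [closure_Ioo hS₀.ne]; exact ⟨le_rfl, hS₀.le⟩)
      (by fun_prop : Continuous fun ε ↦ (S - ε) * (S - ε + 2 * (I - ε))).continuousWithinAt
      continuousWithinAt_const
      fun ε hε ↦ mul_le_of_lt_limsup_of_lt_liminf hc hL (by linarith [hε.2]) (by linarith [hε.1])
        (by linarith [hε.1])
    simpa using this
  have hSI : S = I := le_antisymm (by nlinarith) hIS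
  have hS : S = √(L / 3) := by
    rw [eq_comm, Real.sqrt_eq_iff_mul_self_eq_of_pos hS₀]
    rw [← hSI] at hup hlow
    linarith
  exact tendsto_of_liminf_eq_limsup (hSI ▸ hS :) hS hbdd hbdd'

end NeighbourProduct

theorem norm_mul_one_sub_neg_one_pow_div_two_le (ρ : ℝ) (n : ℕ) :
    ‖ρ * (1 - (-1 : ℝ) ^ n) / 2‖ ≤ |ρ| := by
  rcases n.even_or_odd with h | h <;> norm_num [h.neg_one_pow]

section DiscretePainleveI

variable {ρ : ℝ} {x : ℕ → ℝ}

theorem dPI_scaled_eq (hx0 : x 0 = 0)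
    (hrec : ∀ n : ℕ, 1 ≤ n → x n * (x (n + 1) + x n + x (n - 1))
        = (n : ℝ) + ρ * (1 - (-1 : ℝ) ^ n) / 2) {n : ℕ} (hn : 1 ≤ n) :
    x n / √n * (√(n - 1 : ℕ) / √n * (x (n - 1) / √(n - 1 : ℕ)) + x n / √n
      + √(n + 1 : ℕ) / √n * (x (n + 1) / √(n + 1 : ℕ)))
      = ((n : ℝ) + ρ * (1 - (-1 : ℝ) ^ n) / 2) / n := by
  -- at `m = 0` the quotient is the junk value `x 0 / 0 = 0`
  have hx : ∀ m : ℕ, √m * (x m / √m) = x m := by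
    rintro (_ | m)
    · simp [hx0]
    · exact mul_div_cancel₀ _ (by positivity)
  have hn' : (0 : ℝ) < n := by exact_mod_cast hn
  simp only [div_mul_eq_mul_div, hx]
  rw [← hrec n hn]
  field_simp
  rw [Real.sq_sqrt hn'.le]
  ring

theorem dPI_sq_le (hx : ∀ n, 0 ≤ x n)
    (hrec : ∀ n : ℕ, 1 ≤ n → x n * (x (n + 1) + x n + x (n - 1))
        = (n : ℝ) + ρ * (1 - (-1 : ℝ) ^ n) / 2) {n : ℕ} (hn : 1 ≤ n) :
    (x n / √n) ^ 2 ≤ ((n : ℝ) + ρ * (1 - (-1 : ℝ) ^ n) / 2) / n := by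
  rw [div_pow, Real.sq_sqrt n.cast_nonneg, ← hrec n hn]
  gcongr
  nlinarith [hx n, hx (n + 1), hx (n - 1)]

end DiscretePainleveI

theorem dPI_asymptotics_general (ρ : ℝ) (x : ℕ → ℝ)
    (hx0 : x 0 = 0)
    (hpos : ∀ n, 1 ≤ n → 0 < x n)
    (hrec : ∀ n : ℕ, 1 ≤ n → x n * (x (n + 1) + x n + x (n - 1))
        = (n : ℝ) + ρ * (1 - (-1 : ℝ) ^ n) / 2) :
    Tendsto (fun n : ℕ => x n / Real.sqrt n) atTop (𝓝 (1 / Real.sqrt 3)) := by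
  have hx : ∀ n, 0 ≤ x n := by
    rintro (_ | n)
    exacts [hx0.ge, (hpos _ n.succ_pos).le]
  have hf : Tendsto (fun n : ℕ ↦ ((n : ℝ) + ρ * (1 - (-1 : ℝ) ^ n) / 2) / n) atTop (𝓝 1) :=
    tendsto_natCast_add_div_self
      (isBoundedUnder_of ⟨|ρ|, norm_mul_one_sub_neg_one_pow_div_two_le ρ⟩)
  set c := fun n : ℕ ↦ x n / √n
  have hc : ∀ n, 0 ≤ c n := fun n ↦ div_nonneg (hx n) (Real.sqrt_nonneg _)
  have hc_le : ∀ᶠ n in atTop, c n ≤ 2 := by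
    filter_upwards [eventually_ge_atTop 1, hf.eventually (eventually_le_nhds one_lt_two)]
      with n hn hfn
    nlinarith [dPI_sq_le hx hrec hn, hc n]
  have hα : Tendsto (fun n : ℕ ↦ √(n - 1 : ℕ) / √n) atTop (𝓝 1) := by
    refine (tendsto_sqrt_add_div_sqrt (-1)).congr' ?_
    filter_upwards [eventually_ge_atTop 1] with n hn
    rw [Nat.cast_sub hn, Nat.cast_one, sub_eq_add_neg]
  have hβ : Tendsto (fun n : ℕ ↦ √(n + 1 : ℕ) / √n) atTop (𝓝 1) := by
    simpa using tendsto_sqrt_add_div_sqrt 1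
  have hweighted := hf.congr' <| (eventually_ge_atTop 1).mono fun n hn ↦
    (dPI_scaled_eq hx0 hrec hn).symm
  have hL := tendsto_mul_neighbours_of_weighted (c := c)
    (isBoundedUnder_of_eventually_le (hc_le.mono fun n h ↦ by simpa [abs_of_nonneg (hc n)]))
    hα hβ hweighted
  simpa using tendsto_sqrt_div_three_of_mul_neighbours hc (isBoundedUnder_of_eventually_le hc_le)
    one_pos hL

/-- Positive solutions of the discrete Painlevé I equation
`xₙ(xₙ₊₁ + xₙ + xₙ₋₁) = n + ρ Δₙ` with `x₀ = 0` satisfy `xₙ/√n → 1/√3`. -/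
theorem dPI_asymptotics (ρ : ℝ) (hρ : ρ > -1) (x : ℕ → ℝ)
    (hx0 : x 0 = 0)
    (hpos : ∀ n, 1 ≤ n → 0 < x n)
    (hrec : ∀ n : ℕ, 1 ≤ n → x n * (x (n + 1) + x n + x (n - 1))
        = (n : ℝ) + ρ * (1 - (-1 : ℝ) ^ n) / 2) :
    Tendsto (fun n : ℕ => x n / Real.sqrt n) atTop (𝓝 (1 / Real.sqrt 3)) :=
  dPI_asymptotics_general ρ x hx0 hpos hrec
end

section
/- Let a_n be the recurrence coefficients of the orthonormal polynomials for the Freud weight |x|^ρ exp(-x⁶), ρ > -1, so that 6a_n²(a_{n-2}²a_{n-1}² + a_{n-1}⁴ + 2a_{n-1}²a_n² + a_{n-1}²a_{n+1}² + a_n⁴ + 2a_n²a_{n+1}² + a_{n+1}⁴ + a_{n+1}²a_{n+2}²) = n + ρΔ_n. Then lim_{n→∞} a_n/n^{1/6} = 60^{-1/6}. -/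
open Filter Topology Real

/-!
Put `b n = a n ^ 2`. The recurrence says `6 b_n S_n = n + O(1)`, where `S_n` is a quadratic form
with nonnegative coefficients in `b_{n-2}, …, b_{n+2}`. The cubic form `6 b_n S_n` is monotone and
homogeneous, and `m^{1/3} / n^{1/3} → 1` uniformly on the window `|m - n| ≤ 2`, so the same
equation holds asymptotically for `c n = b n / n^{1/3}` with right-hand side `1`. It forces
`6 c_n³ ≤ 1 + o(1)`, so `c` is bounded. At indices where `c n` is close to `L = limsup c` all
neighbours are at least about `l = liminf c`, and symmetrically, whence
`6L(5l² + 4lL + L²) ≤ 1 ≤ 6l(5L² + 4Ll + l²)`. The difference of the outer terms is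
`6(L - l)(L² + l²)`, so `l = L` and `60 l³ = 1`.
-/

/-- The left-hand side of the Freud equation in the variables `(b_{n-2}, …, b_{n+2})`,
`b = a²`. -/
def freudForm (u v w x y : ℝ) : ℝ :=
  6 * w * (u * v + v ^ 2 + 2 * v * w + v * x + w ^ 2 + 2 * w * x + x ^ 2 + x * y)

def freudWindow (b : ℕ → ℝ) (n : ℕ) : ℝ :=
  freudForm (b (n - 2)) (b (n - 1)) (b n) (b (n + 1)) (b (n + 2))

theorem freudForm_mul_left (t u v w x y : ℝ) :
    freudForm (t * u) (t * v) (t * w) (t * x) (t * y) = t ^ 3 * freudForm u v w x y := by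
  unfold freudForm; ring

theorem freudForm_self (x : ℝ) : freudForm x x x x x = 60 * x ^ 3 := by
  unfold freudForm; ring

theorem freudForm_mono {u v w x y u' v' w' x' y' : ℝ} (hu : 0 ≤ u) (hv : 0 ≤ v) (hw : 0 ≤ w)
    (hx : 0 ≤ x) (hy : 0 ≤ y) (huu : u ≤ u') (hvv : v ≤ v') (hww : w ≤ w') (hxx : x ≤ x')
    (hyy : y ≤ y') : freudForm u v w x y ≤ freudForm u' v' w' x' y' := by
  unfold freudForm
  gcongr <;> linarith

theorem six_mul_pow_three_le_freudForm {u v w x y : ℝ} (hu : 0 ≤ u) (hv : 0 ≤ v) (hw : 0 ≤ w)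
    (hx : 0 ≤ x) (hy : 0 ≤ y) : 6 * w ^ 3 ≤ freudForm u v w x y := by
  have h : 0 ≤ 6 * w * (u * v + v ^ 2 + 2 * v * w + v * x + 2 * w * x + x ^ 2 + x * y) := by
    positivity
  unfold freudForm; nlinarith

theorem le_of_freudForm_le_freudForm {l L : ℝ} (h : freudForm l l L l l ≤ freudForm L L l L L) :
    L ≤ l := by
  have hdiff : freudForm l l L l l - freudForm L L l L L = 6 * (L - l) * (L ^ 2 + l ^ 2) := by
    unfold freudForm; ring
  by_contra! hLl
  have hsq : 0 < L ^ 2 + l ^ 2 := by nlinarith [sq_pos_of_pos (sub_pos.2 hLl)]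
  nlinarith [mul_pos (sub_pos.2 hLl) hsq]

theorem freudWindow_mono {b c : ℕ → ℝ} {n : ℕ} (hb : ∀ m, 0 ≤ b m)
    (hbc : ∀ m, n - 2 ≤ m → m ≤ n + 2 → b m ≤ c m) : freudWindow b n ≤ freudWindow c n :=
  freudForm_mono (hb _) (hb _) (hb _) (hb _) (hb _) (hbc _ le_rfl (by omega))
    (hbc _ (by omega) (by omega)) (hbc _ (by omega) (by omega)) (hbc _ (by omega) (by omega))
    (hbc _ (by omega) le_rfl)

theorem freudWindow_mul_left (t : ℝ) (c : ℕ → ℝ) (n : ℕ) :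
    freudWindow (fun m => t * c m) n = t ^ 3 * freudWindow c n :=
  freudForm_mul_left _ _ _ _ _ _

theorem rpow_one_third_pow_three {x : ℝ} (hx : 0 ≤ x) : (x ^ (1 / 3 : ℝ)) ^ 3 = x := by
  rw [← rpow_natCast, ← rpow_mul hx]; norm_num

theorem tendsto_natCast_add_div_natCast {e : ℕ → ℝ} {C : ℝ} (he : ∀ n, |e n| ≤ C) :
    Tendsto (fun n : ℕ => (n + e n) / n) atTop (𝓝 1) := by
  have hbdd : IsBoundedUnder (· ≤ ·) atTop ((‖·‖) ∘ e) := isBoundedUnder_of ⟨C, he⟩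
  have h := (tendsto_inv_atTop_nhds_zero_nat (𝕜 := ℝ)).zero_mul_isBoundedUnder_le hbdd
  have h₁ : Tendsto (fun n : ℕ => 1 + (n : ℝ)⁻¹ * e n) atTop (𝓝 1) := by
    simpa using h.const_add 1
  refine h₁.congr' ?_
  filter_upwards [eventually_ne_atTop 0] with n hn
  field_simp

theorem freudWindow_div_cbrt_bounds {b : ℕ → ℝ} (hb : ∀ n, 0 ≤ b n) {n : ℕ} (hn : 3 ≤ n) :
    ((n : ℝ) - 2) * freudWindow (fun m => b m / (m : ℝ) ^ (1 / 3 : ℝ)) n ≤ freudWindow b n ∧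
      freudWindow b n ≤ ((n : ℝ) + 2) * freudWindow (fun m => b m / (m : ℝ) ^ (1 / 3 : ℝ)) n := by
  set c : ℕ → ℝ := fun m => b m / (m : ℝ) ^ (1 / 3 : ℝ)
  have hc : ∀ m, 0 ≤ c m := fun m => div_nonneg (hb m) (by positivity)
  have hbc : ∀ m : ℕ, 1 ≤ m → b m = (m : ℝ) ^ (1 / 3 : ℝ) * c m := fun m hm => by
    have : (0 : ℝ) < (m : ℝ) ^ (1 / 3 : ℝ) := rpow_pos_of_pos (by exact_mod_cast hm) _
    simp only [c]
    rw [mul_div_cancel₀ _ this.ne']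
  have hn' : (3 : ℝ) ≤ n := by exact_mod_cast hn
  constructor
  · rw [← rpow_one_third_pow_three (x := (n : ℝ) - 2) (by linarith), ← freudWindow_mul_left]
    refine freudWindow_mono (fun m => mul_nonneg (rpow_nonneg (by linarith) _) (hc m))
      fun m hm₁ hm₂ => ?_
    rw [hbc m (by omega)]
    have : (n : ℝ) ≤ m + 2 := by exact_mod_cast (by omega : n ≤ m + 2)
    exact mul_le_mul_of_nonneg_right (rpow_le_rpow (by linarith) (by linarith) (by norm_num))
      (hc m)
  · rw [← rpow_one_third_pow_three (x := (n : ℝ) + 2) (by positivity), ← freudWindow_mul_left]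
    refine freudWindow_mono hb fun m hm₁ hm₂ => ?_
    rw [hbc m (by omega)]
    have : (m : ℝ) ≤ n + 2 := by exact_mod_cast hm₂
    exact mul_le_mul_of_nonneg_right (rpow_le_rpow m.cast_nonneg this (by norm_num)) (hc m)

theorem tendsto_freudWindow_div_cbrt {b : ℕ → ℝ} (hb : ∀ n, 0 ≤ b n)
    (h : Tendsto (fun n : ℕ => freudWindow b n / n) atTop (𝓝 1)) :
    Tendsto (freudWindow fun n => b n / (n : ℝ) ^ (1 / 3 : ℝ)) atTop (𝓝 1) := by
  have hdiv (x : ℝ) : Tendsto (fun n : ℕ => freudWindow b n / (n + x)) atTop (𝓝 1) := by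
    refine (by simpa using h.mul (tendsto_natCast_div_add_atTop x) :
      Tendsto (fun n : ℕ => freudWindow b n / n * (n / (n + x))) _ _).congr' ?_
    filter_upwards [eventually_ne_atTop 0] with n hn
    field_simp
  refine tendsto_of_tendsto_of_tendsto_of_le_of_le' (hdiv 2) (hdiv (-2)) ?_ ?_
  all_goals
    filter_upwards [eventually_ge_atTop 3] with n hn
    have hn' : (3 : ℝ) ≤ n := by exact_mod_cast hn
    obtain ⟨hlower, hupper⟩ := freudWindow_div_cbrt_bounds hb hn
  · rw [div_le_iff₀ (by positivity)]; linarith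
  · rw [le_div_iff₀ (by linarith)]; linarith

theorem eq_rpow_neg_one_third_of_mul_pow_three_eq_one {x a : ℝ} (hx : 0 ≤ x) (ha : 0 < a)
    (h : a * x ^ 3 = 1) : x = a ^ (-(1 : ℝ) / 3) := by
  refine (pow_left_inj₀ hx (rpow_nonneg ha.le _) three_ne_zero).1 ?_
  rw [← rpow_natCast (a ^ _), ← rpow_mul ha.le]
  norm_num
  rw [rpow_neg_one]
  exact eq_inv_of_mul_eq_one_right h

section Normalized

variable {c : ℕ → ℝ}

theorem eventually_le_one_of_tendsto_freudWindow (hc : ∀ n, 0 ≤ c n)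
    (hW : Tendsto (freudWindow c) atTop (𝓝 1)) : ∀ᶠ n in atTop, c n ≤ 1 := by
  filter_upwards [hW.eventually (eventually_lt_nhds one_lt_two)] with n hn
  have hcube := six_mul_pow_three_le_freudForm (hc (n - 2)) (hc (n - 1)) (hc n) (hc (n + 1))
    (hc (n + 2))
  by_contra! hc₁
  have : 1 < c n ^ 3 := one_lt_pow₀ hc₁ (by norm_num)
  unfold freudWindow at hn
  linarith

theorem freudForm_le_one_of_lt_liminf_of_lt_limsup {p q : ℝ} (hc : ∀ n, 0 ≤ c n)
    (hW : Tendsto (freudWindow c) atTop (𝓝 1)) (hp : 0 ≤ p) (hq : 0 ≤ q)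
    (hpl : p < liminf c atTop) (hqL : q < limsup c atTop) : freudForm p p q p p ≤ 1 := by
  have hbdd : IsBoundedUnder (· ≥ ·) atTop c := isBoundedUnder_of_eventually_ge (.of_forall hc)
  obtain ⟨N, hN⟩ := eventually_atTop.1 (eventually_lt_of_lt_liminf hpl hbdd)
  refine ge_of_tendsto_of_frequently hW <|
    ((frequently_lt_of_lt_limsup hbdd.isCoboundedUnder_le hqL).and_eventually
      (eventually_ge_atTop (N + 2))).mono ?_
  rintro n ⟨hqn, hn⟩
  exact freudForm_mono hp hp hq hp hp (hN _ (by omega)).le (hN _ (by omega)).le hqn.le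
    (hN _ (by omega)).le (hN _ (by omega)).le

theorem one_le_freudForm_of_liminf_lt_of_limsup_lt {p q : ℝ} (hc : ∀ n, 0 ≤ c n)
    (hbdd : IsBoundedUnder (· ≤ ·) atTop c) (hW : Tendsto (freudWindow c) atTop (𝓝 1))
    (hlp : liminf c atTop < p) (hLq : limsup c atTop < q) : 1 ≤ freudForm q q p q q := by
  obtain ⟨N, hN⟩ := eventually_atTop.1 (eventually_lt_of_limsup_lt hLq hbdd)
  refine le_of_tendsto_of_frequently hW <|
    ((frequently_lt_of_liminf_lt hbdd.isCoboundedUnder_ge hlp).and_eventually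
      (eventually_ge_atTop (N + 2))).mono ?_
  rintro n ⟨hpn, hn⟩
  exact freudForm_mono (hc _) (hc _) (hc _) (hc _) (hc _) (hN _ (by omega)).le
    (hN _ (by omega)).le hpn.le (hN _ (by omega)).le (hN _ (by omega)).le

theorem tendsto_of_tendsto_freudWindow (hc : ∀ n, 0 ≤ c n)
    (hW : Tendsto (freudWindow c) atTop (𝓝 1)) :
    Tendsto c atTop (𝓝 ((60 : ℝ) ^ (-(1 : ℝ) / 3))) := by
  have hbdd : IsBoundedUnder (· ≤ ·) atTop c :=
    isBoundedUnder_of_eventually_le (eventually_le_one_of_tendsto_freudWindow hc hW)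
  have hbdd' : IsBoundedUnder (· ≥ ·) atTop c := isBoundedUnder_of_eventually_ge (.of_forall hc)
  set l := liminf c atTop
  set L := limsup c atTop
  have hl : 0 ≤ l := le_liminf_of_le hbdd.isCoboundedUnder_ge (.of_forall hc)
  have hlL : l ≤ L := liminf_le_limsup hbdd hbdd'
  have hupper : 1 ≤ freudForm L L l L L := by
    have hcont : Continuous fun ε => freudForm (L + ε) (L + ε) (l + ε) (L + ε) (L + ε) := by
      unfold freudForm; fun_prop
    refine ge_of_tendsto ((hcont.tendsto' 0 (freudForm L L l L L) (by simp)).mono_left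
      (nhdsWithin_le_nhds (s := Set.Ioi 0))) ?_
    filter_upwards [self_mem_nhdsWithin] with ε (hε : 0 < ε)
    exact one_le_freudForm_of_liminf_lt_of_limsup_lt hc hbdd hW (by linarith) (by linarith)
  have hl₀ : 0 < l := by
    refine hl.lt_of_ne fun h => ?_
    rw [← h] at hupper
    unfold freudForm at hupper
    linarith
  have hlower : freudForm l l L l l ≤ 1 := by
    have hcont : Continuous fun ε => freudForm (l - ε) (l - ε) (L - ε) (l - ε) (l - ε) := by
      unfold freudForm; fun_prop
    refine le_of_tendsto ((hcont.tendsto' 0 (freudForm l l L l l) (by simp)).mono_left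
      (nhdsWithin_le_nhds (s := Set.Ioi 0))) ?_
    filter_upwards [Ioo_mem_nhdsGT hl₀] with ε ⟨hε₀, hεl⟩
    exact freudForm_le_one_of_lt_liminf_of_lt_limsup hc hW (by linarith) (by linarith)
      (by linarith) (by linarith)
  have hLl : L = l := le_antisymm (le_of_freudForm_le_freudForm (hlower.trans hupper)) hlL
  have hl60 : l = (60 : ℝ) ^ (-(1 : ℝ) / 3) := by
    refine eq_rpow_neg_one_third_of_mul_pow_three_eq_one hl (by norm_num) ?_
    rw [hLl, freudForm_self] at hupper hlower
    linarith
  exact tendsto_of_liminf_eq_limsup hl60 (hLl.trans hl60) hbdd hbdd'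

end Normalized

theorem div_rpow_one_sixth_eq_sqrt {x y : ℝ} (hx : 0 ≤ x) (hy : 0 ≤ y) :
    x / y ^ ((1 : ℝ) / 6) = √(x ^ 2 / y ^ (1 / 3 : ℝ)) := by
  rw [sqrt_div' _ (rpow_nonneg hy _), sqrt_sq hx, sqrt_eq_rpow, ← rpow_mul hy]
  norm_num

theorem freud_m6_asymptotics_general (ρ : ℝ) (a : ℕ → ℝ)
    (hpos : ∀ n, 1 ≤ n → 0 < a n)
    (hrec : ∀ n : ℕ, 1 ≤ n →
      6 * (a n) ^ 2 * ((a (n - 2)) ^ 2 * (a (n - 1)) ^ 2 + (a (n - 1)) ^ 4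
        + 2 * (a (n - 1)) ^ 2 * (a n) ^ 2 + (a (n - 1)) ^ 2 * (a (n + 1)) ^ 2
        + (a n) ^ 4 + 2 * (a n) ^ 2 * (a (n + 1)) ^ 2 + (a (n + 1)) ^ 4
        + (a (n + 1)) ^ 2 * (a (n + 2)) ^ 2)
      = (n : ℝ) + ρ * (if Even n then 0 else 1)) :
    Tendsto (fun n : ℕ => a n / (n : ℝ) ^ ((1 : ℝ) / 6)) atTop
      (𝓝 ((60 : ℝ) ^ (-(1 : ℝ) / 6))) := by
  set b : ℕ → ℝ := fun n => a n ^ 2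
  have hW : Tendsto (fun n : ℕ => freudWindow b n / n) atTop (𝓝 1) := by
    have hΔ (n : ℕ) : |ρ * (if Even n then 0 else 1)| ≤ |ρ| := by split_ifs <;> simp
    refine (tendsto_natCast_add_div_natCast hΔ).congr' ?_
    filter_upwards [eventually_ge_atTop 1] with n hn
    rw [← hrec n hn]
    simp only [freudWindow, freudForm, b]
    ring
  have hc := tendsto_of_tendsto_freudWindow (fun n => by positivity)
    (tendsto_freudWindow_div_cbrt (fun n => sq_nonneg (a n)) hW)
  have hval : √((60 : ℝ) ^ (-(1 : ℝ) / 3)) = 60 ^ (-(1 : ℝ) / 6) := by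
    rw [sqrt_eq_rpow, ← rpow_mul (by norm_num)]
    norm_num
  refine hval ▸ ((continuous_sqrt.tendsto _).comp hc).congr' ?_
  filter_upwards [eventually_ge_atTop 1] with n hn
  exact (div_rpow_one_sixth_eq_sqrt (hpos n hn).le n.cast_nonneg).symm

/-- For the Freud weight `|x|^ρ exp(-x⁶)`, the recurrence coefficients satisfying
the fourth-order Freud equation behave like `aₙ ~ (n/60)^{1/6}`. -/
theorem freud_m6_asymptotics (ρ : ℝ) (hρ : ρ > -1) (a : ℕ → ℝ)
    (ha0 : a 0 = 0)
    (hpos : ∀ n, 1 ≤ n → 0 < a n)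
    (hrec : ∀ n : ℕ, 1 ≤ n →
      6 * (a n) ^ 2 * ((a (n - 2)) ^ 2 * (a (n - 1)) ^ 2 + (a (n - 1)) ^ 4
        + 2 * (a (n - 1)) ^ 2 * (a n) ^ 2 + (a (n - 1)) ^ 2 * (a (n + 1)) ^ 2
        + (a n) ^ 4 + 2 * (a n) ^ 2 * (a (n + 1)) ^ 2 + (a (n + 1)) ^ 4
        + (a (n + 1)) ^ 2 * (a (n + 2)) ^ 2)
      = (n : ℝ) + ρ * (if Even n then 0 else 1)) :
    Tendsto (fun n : ℕ => a n / (n : ℝ) ^ ((1 : ℝ) / 6)) atTop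
      (𝓝 ((60 : ℝ) ^ (-(1 : ℝ) / 6))) :=
  freud_m6_asymptotics_general ρ a hpos hrec
end

section
/- Let p_n be the orthonormal polynomials for the generalized Charlier weight w_k = a^k/(k!)² on ℕ, a > 0, with recurrence coefficients a_n, b_n. Then p_n(x+1) = p_n(x) + (n/a_n)p_{n-1}(x) + (a_n a_{n-1}/a)p_{n-2}(x). -/
/-!
Write `γₙ` for the leading coefficient of `pₙ` and `⟨f, g⟩ = ∑ₖ f(k) g(k) wₖ`; comparing top
coefficients in the recurrence gives `aₙ = γₙ₋₁ / γₙ`. The forward difference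
`Δpₙ = pₙ(x + 1) - pₙ(x)` has degree `n - 1` and leading coefficient `n γₙ`, so it is a combination
of `p₀, …, pₙ₋₁`, and its coefficient on `pₙ₋₁` is `n γₙ / γₙ₋₁ = n / aₙ`. For `j < n - 1` the
Pearson equation `wₖ₋₁ = (k² / a) wₖ` moves the shift onto `pⱼ`:
`⟨pₙ(· + 1), pⱼ⟩ = ⟨pₙ, x² pⱼ(x - 1) / a⟩`. The right-hand polynomial has degree `j + 2`, so this
vanishes unless `j = n - 2`, where it is `γₙ₋₂ / (a γₙ) = aₙ aₙ₋₁ / a`.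
-/

open Polynomial

section ForwardDifference

variable {R : Type*} [CommRing R] {f : R[X]} {n : ℕ}

theorem coeff_taylor_one_of_natDegree_le (hf : f.natDegree ≤ n + 1) :
    (taylor 1 f).coeff n = f.coeff n + (n + 1) * f.coeff (n + 1) := by
  have hdeg : (hasseDeriv n f).natDegree < 2 := by
    have := natDegree_hasseDeriv_le f n
    omega
  rw [taylor_coeff, eval_eq_sum_range' hdeg]
  simp [Finset.sum_range_succ, hasseDeriv_coeff, add_comm 1 n]

theorem natDegree_taylor_one_sub_le (hf : f.natDegree ≤ n + 1) :
    (taylor 1 f - f).natDegree ≤ n := by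
  rw [natDegree_le_iff_coeff_eq_zero]
  intro t ht
  rw [coeff_sub, coeff_taylor_one_of_natDegree_le (by omega),
    coeff_eq_zero_of_natDegree_lt (show f.natDegree < t + 1 by omega)]
  ring

theorem coeff_taylor_one_sub (hf : f.natDegree ≤ n + 1) :
    (taylor 1 f - f).coeff n = (n + 1) * f.coeff (n + 1) := by
  rw [coeff_sub, coeff_taylor_one_of_natDegree_le hf]
  ring

end ForwardDifference

noncomputable def discreteInner (w : ℕ → ℝ) (f g : ℝ[X]) : ℝ :=
  ∑' k : ℕ, f.eval (k : ℝ) * g.eval (k : ℝ) * w k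

section DiscreteInner

variable {w : ℕ → ℝ}

theorem discreteInner_comm (f g : ℝ[X]) : discreteInner w f g = discreteInner w g f := by
  simp only [discreteInner, mul_comm (f.eval _)]

@[simp]
theorem discreteInner_zero_left (g : ℝ[X]) : discreteInner w 0 g = 0 := by
  simp [discreteInner]

theorem discreteInner_smul_left (c : ℝ) (f g : ℝ[X]) :
    discreteInner w (c • f) g = c * discreteInner w f g := by
  simp only [discreteInner, eval_smul, smul_eq_mul, mul_assoc, tsum_mul_left]

/-- Summation by parts: under the Pearson equation the boundary term vanishes because
`σ(0) = 0`, so `g ↦ σ g(· - 1)` is adjoint to the shift `f ↦ f(· + 1)`. -/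
theorem discreteInner_taylor_one {σ : ℝ[X]} (hσ : σ.eval 0 = 0)
    (hw : ∀ k : ℕ, w k = σ.eval ((k : ℝ) + 1) * w (k + 1)) {f g : ℝ[X]}
    (hs : Summable fun k : ℕ => f.eval (k : ℝ) * (σ * taylor (-1) g).eval (k : ℝ) * w k) :
    discreteInner w (taylor 1 f) g = discreteInner w f (σ * taylor (-1) g) := by
  rw [discreteInner, discreteInner, hs.tsum_eq_zero_add]
  simp only [Nat.cast_zero, eval_mul, hσ, zero_mul, mul_zero, zero_add]
  refine tsum_congr fun k => ?_
  rw [hw k]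
  simp only [taylor_eval, Nat.cast_succ, add_neg_cancel_right]
  ring

end DiscreteInner

noncomputable def generalizedCharlierWeight (a : ℝ) (k : ℕ) : ℝ := a ^ k / (k.factorial : ℝ) ^ 2

theorem generalizedCharlierWeight_pearson {a : ℝ} (ha : a ≠ 0) (k : ℕ) :
    generalizedCharlierWeight a k
      = (C a⁻¹ * X ^ 2).eval ((k : ℝ) + 1) * generalizedCharlierWeight a (k + 1) := by
  have hk : (k.factorial : ℝ) ≠ 0 := Nat.cast_ne_zero.2 k.factorial_ne_zero
  simp only [generalizedCharlierWeight, eval_mul, eval_C, eval_pow, eval_X, Nat.factorial_succ,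
    Nat.cast_mul, Nat.cast_succ]
  field_simp
  ring

structure IsOrthonormalPolynomials (w : ℕ → ℝ) (p : ℕ → ℝ[X]) : Prop where
  natDegree_eq : ∀ n, (p n).natDegree = n
  summable : ∀ n m, Summable fun k : ℕ => (p n).eval (k : ℝ) * (p m).eval (k : ℝ) * w k
  orthonormal : ∀ n m, discreteInner w (p n) (p m) = if n = m then 1 else 0

namespace IsOrthonormalPolynomials

variable {w : ℕ → ℝ} {p : ℕ → ℝ[X]}

theorem ne_zero (h : IsOrthonormalPolynomials w p) (n : ℕ) : p n ≠ 0 := by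
  intro hn
  simpa [hn] using h.orthonormal n n

theorem leadingCoeff_ne_zero (h : IsOrthonormalPolynomials w p) (n : ℕ) :
    (p n).leadingCoeff ≠ 0 :=
  Polynomial.leadingCoeff_ne_zero.2 (h.ne_zero n)

theorem coeff_self (h : IsOrthonormalPolynomials w p) (n : ℕ) :
    (p n).coeff n = (p n).leadingCoeff := by
  rw [leadingCoeff, h.natDegree_eq]

def toSequence (h : IsOrthonormalPolynomials w p) : Polynomial.Sequence ℝ where
  elems' := p
  degree_eq' n := by rw [degree_eq_natDegree (h.ne_zero n), h.natDegree_eq]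

theorem summable_eval_mul_of_forall (h : IsOrthonormalPolynomials w p) {g : ℝ[X]}
    (hg : ∀ n, Summable fun k : ℕ => (p n).eval (k : ℝ) * g.eval (k : ℝ) * w k) (f : ℝ[X]) :
    Summable fun k : ℕ => f.eval (k : ℝ) * g.eval (k : ℝ) * w k := by
  have hf : f ∈ Submodule.span ℝ (Set.range h.toSequence) := by
    rw [h.toSequence.span fun n => (h.leadingCoeff_ne_zero n).isUnit]
    exact Submodule.mem_top
  induction hf using Submodule.span_induction with
  | mem _ hx =>
    obtain ⟨n, rfl⟩ := hx
    exact hg n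
  | zero => simp [summable_zero]
  | add f₁ f₂ _ _ h₁ h₂ => simpa only [eval_add, add_mul] using h₁.add h₂
  | smul c f _ hf => simpa only [eval_smul, smul_eq_mul, mul_assoc] using hf.mul_left c

theorem summable_eval_mul (h : IsOrthonormalPolynomials w p) (f g : ℝ[X]) :
    Summable fun k : ℕ => f.eval (k : ℝ) * g.eval (k : ℝ) * w k := by
  refine h.summable_eval_mul_of_forall (fun n => ?_) f
  simpa only [mul_comm (g.eval _)] using
    h.summable_eval_mul_of_forall (fun m => h.summable m n) g

theorem inner_add_left (h : IsOrthonormalPolynomials w p) (f₁ f₂ g : ℝ[X]) :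
    discreteInner w (f₁ + f₂) g = discreteInner w f₁ g + discreteInner w f₂ g := by
  simp only [discreteInner, eval_add, add_mul]
  exact (h.summable_eval_mul f₁ g).tsum_add (h.summable_eval_mul f₂ g)

theorem inner_sub_left (h : IsOrthonormalPolynomials w p) (f₁ f₂ g : ℝ[X]) :
    discreteInner w (f₁ - f₂) g = discreteInner w f₁ g - discreteInner w f₂ g := by
  simp only [discreteInner, eval_sub, sub_mul]
  exact (h.summable_eval_mul f₁ g).tsum_sub (h.summable_eval_mul f₂ g)

theorem eq_sum_inner_smul (h : IsOrthonormalPolynomials w p) {q : ℝ[X]} {N : ℕ}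
    (hq : q.natDegree ≤ N) :
    q = ∑ j ∈ Finset.range (N + 1), discreteInner w q (p j) • p j := by
  have hmem : q ∈ Submodule.span ℝ (h.toSequence '' Set.Iic N) := by
    rw [h.toSequence.span_degreeLE fun n _ => (h.leadingCoeff_ne_zero n).isUnit, mem_degreeLE]
    exact degree_le_of_natDegree_le hq
  clear hq
  induction hmem using Submodule.span_induction with
  | mem _ hx =>
    obtain ⟨i, hi, rfl⟩ := hx
    have hi : i ∈ Finset.range (N + 1) := Finset.mem_range.2 (Nat.lt_succ_of_le hi)
    change p i = ∑ j ∈ Finset.range (N + 1), discreteInner w (p i) (p j) • p j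
    simp only [h.orthonormal, ite_smul, one_smul, zero_smul, Finset.sum_ite_eq, if_pos hi]
  | zero => simp
  | add f₁ f₂ _ _ h₁ h₂ =>
    simp only [h.inner_add_left, add_smul, Finset.sum_add_distrib]
    rw [← h₁, ← h₂]
  | smul c f _ hf =>
    simp only [discreteInner_smul_left, mul_smul, ← Finset.smul_sum]
    rw [← hf]

theorem inner_eq_coeff_div_leadingCoeff (h : IsOrthonormalPolynomials w p) {q : ℝ[X]} {n : ℕ}
    (hq : q.natDegree ≤ n) :
    discreteInner w q (p n) = q.coeff n / (p n).leadingCoeff := by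
  have hcoeff := congrArg (coeff · n) (h.eq_sum_inner_smul hq)
  simp only [finsetSum_coeff, coeff_add, coeff_smul, smul_eq_mul, Finset.sum_range_succ] at hcoeff
  rw [Finset.sum_eq_zero fun j hj => by
      rw [coeff_eq_zero_of_natDegree_lt (by rw [h.natDegree_eq]; exact Finset.mem_range.1 hj),
        mul_zero],
    zero_add, h.coeff_self] at hcoeff
  rw [hcoeff, mul_div_cancel_right₀ _ (h.leadingCoeff_ne_zero n)]

theorem inner_eq_zero_of_natDegree_lt (h : IsOrthonormalPolynomials w p) {q : ℝ[X]} {n : ℕ}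
    (hq : q.natDegree < n) : discreteInner w q (p n) = 0 := by
  rw [h.inner_eq_coeff_div_leadingCoeff hq.le, coeff_eq_zero_of_natDegree_lt hq, zero_div]

theorem inner_taylor_one_sub_self_pred (h : IsOrthonormalPolynomials w p) (m : ℕ) :
    discreteInner w (taylor 1 (p (m + 1)) - p (m + 1)) (p m)
      = ((m + 1 : ℕ) : ℝ) * (p (m + 1)).leadingCoeff / (p m).leadingCoeff := by
  have hdeg : (p (m + 1)).natDegree ≤ m + 1 := (h.natDegree_eq _).le
  rw [h.inner_eq_coeff_div_leadingCoeff (natDegree_taylor_one_sub_le hdeg),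
    coeff_taylor_one_sub hdeg, h.coeff_self, Nat.cast_succ]

theorem inner_taylor_one_sub_of_lt (h : IsOrthonormalPolynomials w p) {σ : ℝ[X]}
    (hσ : σ.eval 0 = 0) (hw : ∀ k : ℕ, w k = σ.eval ((k : ℝ) + 1) * w (k + 1)) {n j : ℕ}
    (hj : j < n) :
    discreteInner w (taylor 1 (p n) - p n) (p j)
      = discreteInner w (σ * taylor (-1) (p j)) (p n) := by
  rw [h.inner_sub_left, h.orthonormal, if_neg hj.ne', sub_zero,
    discreteInner_taylor_one hσ hw (h.summable_eval_mul _ _), discreteInner_comm]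

theorem taylor_one_sub_one (h : IsOrthonormalPolynomials w p) :
    taylor 1 (p 1) - p 1 = ((p 1).leadingCoeff / (p 0).leadingCoeff) • p 0 := by
  rw [h.eq_sum_inner_smul (natDegree_taylor_one_sub_le (h.natDegree_eq 1).le),
    Finset.sum_range_one, h.inner_taylor_one_sub_self_pred 0]
  simp

theorem taylor_one_sub_eq (h : IsOrthonormalPolynomials w p) {σ : ℝ[X]} (hσ0 : σ.eval 0 = 0)
    (hσ2 : σ.natDegree ≤ 2) (hw : ∀ k : ℕ, w k = σ.eval ((k : ℝ) + 1) * w (k + 1)) (m : ℕ) :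
    taylor 1 (p (m + 2)) - p (m + 2)
      = (((m + 2 : ℕ) : ℝ) * (p (m + 2)).leadingCoeff / (p (m + 1)).leadingCoeff) • p (m + 1)
        + (σ.coeff 2 * (p m).leadingCoeff / (p (m + 2)).leadingCoeff) • p m := by
  have hdeg : ∀ j, (taylor (-1) (p j)).natDegree ≤ j := fun j => by
    rw [natDegree_taylor, h.natDegree_eq]
  have hdegσ : ∀ j, (σ * taylor (-1) (p j)).natDegree ≤ 2 + j := fun j =>
    natDegree_mul_le.trans (add_le_add hσ2 (hdeg j))
  have hlow : ∀ j ∈ Finset.range m,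
      discreteInner w (taylor 1 (p (m + 2)) - p (m + 2)) (p j) • p j = 0 := by
    intro j hj
    have hj := Finset.mem_range.1 hj
    rw [h.inner_taylor_one_sub_of_lt hσ0 hw (by omega),
      h.inner_eq_zero_of_natDegree_lt ((hdegσ j).trans_lt (by omega)), zero_smul]
  have hcoeff : (σ * taylor (-1) (p m)).coeff (m + 2) = σ.coeff 2 * (p m).leadingCoeff := by
    have hlead := coeff_taylor_natDegree (r := -1) (f := p m)
    rw [h.natDegree_eq] at hlead
    rw [add_comm m 2, coeff_mul_add_eq_of_natDegree_le hσ2 (hdeg m), hlead]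
  rw [h.eq_sum_inner_smul (natDegree_taylor_one_sub_le (h.natDegree_eq (m + 2)).le),
    Finset.sum_range_succ, Finset.sum_range_succ, Finset.sum_eq_zero hlow, zero_add,
    h.inner_taylor_one_sub_of_lt hσ0 hw (by omega),
    h.inner_eq_coeff_div_leadingCoeff ((hdegσ m).trans (by omega)), hcoeff,
    h.inner_taylor_one_sub_self_pred (m + 1), add_comm]

end IsOrthonormalPolynomials

theorem leadingCoeff_eq_mul_leadingCoeff_succ {p : ℕ → ℝ[X]} {A b : ℕ → ℝ}
    (hdeg : ∀ n, (p n).natDegree = n)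
    (hrec : ∀ n : ℕ, ∀ x : ℝ,
      x * (p n).eval x
        = A (n + 1) * (p (n + 1)).eval x + b n * (p n).eval x + A n * (p (n - 1)).eval x)
    (n : ℕ) :
    (p n).leadingCoeff = A (n + 1) * (p (n + 1)).leadingCoeff := by
  have hpoly : X * p n = C (A (n + 1)) * p (n + 1) + C (b n) * p n + C (A n) * p (n - 1) :=
    Polynomial.funext fun x => by simpa using hrec n x
  have hcoeff := congrArg (coeff · (n + 1)) hpoly
  simp only [coeff_X_mul, coeff_add, coeff_C_mul] at hcoeff
  rw [coeff_eq_zero_of_natDegree_lt (p := p n) (n := n + 1) (by rw [hdeg]; omega),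
    coeff_eq_zero_of_natDegree_lt (p := p (n - 1)) (n := n + 1) (by rw [hdeg]; omega),
    mul_zero, mul_zero, add_zero, add_zero] at hcoeff
  rw [leadingCoeff, leadingCoeff, hdeg, hdeg, hcoeff]

theorem generalized_charlier_structure_relation_general (a : ℝ) (ha : 0 < a)
    (p : ℕ → Polynomial ℝ) (A b : ℕ → ℝ)
    (hdeg : ∀ n, (p n).natDegree = n)
    (hA0 : A 0 = 0)
    (hsum : ∀ n m : ℕ, Summable
      (fun k : ℕ => (p n).eval (k : ℝ) * (p m).eval (k : ℝ)
        * (a ^ k / ((k.factorial : ℝ)) ^ 2)))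
    (horth : ∀ n m : ℕ,
      (∑' k : ℕ, (p n).eval (k : ℝ) * (p m).eval (k : ℝ) * (a ^ k / ((k.factorial : ℝ)) ^ 2))
        = if n = m then 1 else 0)
    (hrec : ∀ n : ℕ, ∀ x : ℝ,
      x * (p n).eval x
        = A (n + 1) * (p (n + 1)).eval x + b n * (p n).eval x + A n * (p (n - 1)).eval x) :
    ∀ n : ℕ, ∀ x : ℝ, (p n).eval (x + 1)
      = (p n).eval x + ((n : ℝ) / A n) * (p (n - 1)).eval x
        + (A n * A (n - 1) / a) * (p (n - 2)).eval x := by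
  have hp : IsOrthonormalPolynomials (generalizedCharlierWeight a) p := ⟨hdeg, hsum, horth⟩
  have hA : ∀ n, A (n + 1) = (p n).leadingCoeff / (p (n + 1)).leadingCoeff := fun n => by
    rw [leadingCoeff_eq_mul_leadingCoeff_succ hdeg hrec n,
      mul_div_cancel_right₀ _ (hp.leadingCoeff_ne_zero _)]
  intro n x
  match n with
  | 0 =>
    rw [eq_C_of_natDegree_eq_zero (hdeg 0)]
    simp [hA0]
  | 1 =>
    have hΔ := congrArg (eval x) hp.taylor_one_sub_one
    simp only [eval_sub, eval_smul, taylor_eval, smul_eq_mul, sub_eq_iff_eq_add'] at hΔ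
    rw [hΔ, hA 0]
    simp [hA0]
  | m + 2 =>
    have hσ2 : (C a⁻¹ * X ^ 2 : ℝ[X]).natDegree ≤ 2 := natDegree_C_mul_X_pow_le _ _
    have hΔ := congrArg (eval x) (hp.taylor_one_sub_eq (by simp) hσ2
      (generalizedCharlierWeight_pearson ha.ne') m)
    simp only [eval_sub, eval_add, eval_smul, taylor_eval, smul_eq_mul, coeff_C_mul_X_pow,
      if_pos, sub_eq_iff_eq_add'] at hΔ
    rw [hΔ, show m + 2 - 1 = m + 1 from rfl, Nat.add_sub_cancel, hA, hA]
    have := hp.leadingCoeff_ne_zero (m + 1)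
    have := hp.leadingCoeff_ne_zero (m + 2)
    field_simp
    ring

/-- Structure relation for the orthonormal generalized Charlier polynomials
(weight `a^k/(k!)²`): `pₙ(x+1) = pₙ(x) + (n/aₙ)pₙ₋₁(x) + (aₙaₙ₋₁/a)pₙ₋₂(x)`. -/
theorem generalized_charlier_structure_relation (a : ℝ) (ha : 0 < a)
    (p : ℕ → Polynomial ℝ) (A b : ℕ → ℝ)
    (hdeg : ∀ n, (p n).natDegree = n)
    (hlead : ∀ n, 0 < (p n).leadingCoeff)
    (hA0 : A 0 = 0)
    (hApos : ∀ n, 1 ≤ n → 0 < A n)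
    (hsum : ∀ n m : ℕ, Summable
      (fun k : ℕ => (p n).eval (k : ℝ) * (p m).eval (k : ℝ)
        * (a ^ k / ((k.factorial : ℝ)) ^ 2)))
    (horth : ∀ n m : ℕ,
      (∑' k : ℕ, (p n).eval (k : ℝ) * (p m).eval (k : ℝ) * (a ^ k / ((k.factorial : ℝ)) ^ 2))
        = if n = m then 1 else 0)
    (hrec : ∀ n : ℕ, ∀ x : ℝ,
      x * (p n).eval x
        = A (n + 1) * (p (n + 1)).eval x + b n * (p n).eval x + A n * (p (n - 1)).eval x) :
    ∀ n : ℕ, ∀ x : ℝ, (p n).eval (x + 1)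
      = (p n).eval x + ((n : ℝ) / A n) * (p (n - 1)).eval x
        + (A n * A (n - 1) / a) * (p (n - 2)).eval x :=
  generalized_charlier_structure_relation_general a ha p A b hdeg hA0 hsum horth hrec
end

section
/- Let (a_n)_{n≥0} with a_0 = 0, a_n > 0 for n ≥ 1, satisfy the q-discrete Painlevé I equation q^{n-1}(1 - q^n) = a_n²(a_{n+1}² + q^{-n+1}a_n² + q²a_{n-1}² + q^{-2n+3}a_{n+1}²a_n²a_{n-1}²) for all n ≥ 1, where 0 < q < 1. Then a_n⁴ ≤ q^{2n-2}(1 - q^n) for all n ≥ 1, a_n → 0, and lim_{n→∞} a_n²/q^{n-1} = 1. -/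
/-!
In the variables `yₙ = aₙ² / q^{n-1}` the equation reads
`qⁿ (1 + yₙ₊₁ yₙ)(1 + yₙ₋₁ yₙ) = 1 - yₙ²`. Since `yₖ ≥ 0`, the product is at least `1`,
so `yₙ² ≤ 1 - qⁿ`; in particular `yₖ ≤ 1`, so the product is at most `4` and
`1 - 4 qⁿ ≤ yₙ² ≤ yₙ ≤ 1`. Squeezing gives `yₙ → 1`, and `aₙ² ≤ q^{n-1}` gives `aₙ → 0`.
-/

open Filter Topology

lemma sq_le_one_sub_of_mul_eq {s u v w : ℝ} (hs : 0 ≤ s) (hu : 0 ≤ u) (hv : 0 ≤ v) (hw : 0 ≤ w)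
    (h : s * ((1 + u * v) * (1 + w * v)) = 1 - v ^ 2) : v ^ 2 ≤ 1 - s := by
  have hprod : 1 ≤ (1 + u * v) * (1 + w * v) := by
    nlinarith [mul_nonneg hu hv, mul_nonneg hw hv, mul_nonneg (mul_nonneg hu hv) (mul_nonneg hw hv)]
  nlinarith [mul_le_mul_of_nonneg_left hprod hs]

lemma one_sub_four_mul_le_sq_of_mul_eq {s u v w : ℝ} (hs : 0 ≤ s) (hv : 0 ≤ v) (hw : 0 ≤ w)
    (hu1 : u ≤ 1) (hv1 : v ≤ 1) (hw1 : w ≤ 1)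
    (h : s * ((1 + u * v) * (1 + w * v)) = 1 - v ^ 2) : 1 - 4 * s ≤ v ^ 2 := by
  have huv : 1 + u * v ≤ 2 := by nlinarith [mul_le_one₀ hu1 hv hv1]
  have hwv : 1 + w * v ≤ 2 := by nlinarith [mul_le_one₀ hw1 hv hv1]
  have hprod : (1 + u * v) * (1 + w * v) ≤ 4 :=
    (mul_le_mul huv hwv (by positivity) zero_le_two).trans_eq (by norm_num)
  nlinarith [mul_le_mul_of_nonneg_left hprod hs]

lemma tendsto_zero_of_sq_le_pow {q : ℝ} {a : ℕ → ℝ} (hq : 0 ≤ q) (hq1 : q < 1) {k : ℕ}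
    (h : ∀ n, k ≤ n → a n ^ 2 ≤ q ^ (n - k)) : Tendsto a atTop (𝓝 0) := by
  have hsqrt : √q < 1 := by rw [Real.sqrt_lt' one_pos, one_pow]; exact hq1
  refine squeeze_zero_norm' ?_ ((tendsto_pow_atTop_nhds_zero_of_lt_one (Real.sqrt_nonneg q)
    hsqrt).comp (tendsto_sub_atTop_nat k))
  filter_upwards [eventually_ge_atTop k] with n hn
  refine abs_le_of_sq_le_sq ?_ (pow_nonneg (Real.sqrt_nonneg q) _)
  rw [Function.comp_apply, ← pow_mul, mul_comm, pow_mul, Real.sq_sqrt hq]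
  exact h n hn

section RescaledRecurrence

variable {q : ℝ} {y : ℕ → ℝ} (hq : 0 ≤ q) (hy : ∀ n, 0 ≤ y n)
  (hrec : ∀ n, 1 ≤ n → q ^ n * ((1 + y (n + 1) * y n) * (1 + y (n - 1) * y n)) = 1 - y n ^ 2)
include hq hy hrec

lemma sq_le_one_sub_pow_of_rescaled_rec {n : ℕ} (hn : 1 ≤ n) : y n ^ 2 ≤ 1 - q ^ n :=
  sq_le_one_sub_of_mul_eq (pow_nonneg hq n) (hy _) (hy _) (hy _) (hrec n hn)

lemma le_one_of_rescaled_rec {n : ℕ} (hn : 1 ≤ n) : y n ≤ 1 := by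
  have := sq_le_one_sub_pow_of_rescaled_rec hq hy hrec hn
  nlinarith [pow_nonneg hq n, hy n]

lemma one_sub_four_mul_pow_le_of_rescaled_rec {n : ℕ} (hn : 2 ≤ n) : 1 - 4 * q ^ n ≤ y n := by
  have hle : ∀ k, n - 1 ≤ k → y k ≤ 1 := fun k hk => le_one_of_rescaled_rec hq hy hrec (by omega)
  have hsq := one_sub_four_mul_le_sq_of_mul_eq (pow_nonneg hq n) (hy _) (hy _)
    (hle _ (by omega)) (hle _ (by omega)) (hle _ le_rfl) (hrec n (by omega))
  nlinarith [mul_le_of_le_one_left (hy n) (hle n (by omega))]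

lemma tendsto_one_of_rescaled_rec (hq1 : q < 1) : Tendsto y atTop (𝓝 1) := by
  have hpow := tendsto_pow_atTop_nhds_zero_of_lt_one hq hq1
  have hlow : Tendsto (fun n : ℕ => 1 - 4 * q ^ n) atTop (𝓝 1) := by
    simpa using (hpow.const_mul 4).const_sub 1
  refine tendsto_of_tendsto_of_tendsto_of_le_of_le' hlow tendsto_const_nhds ?_ ?_
  · filter_upwards [eventually_ge_atTop 2] with n hn
    exact one_sub_four_mul_pow_le_of_rescaled_rec hq hy hrec hn
  · filter_upwards [eventually_ge_atTop 1] with n hn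
    exact le_one_of_rescaled_rec hq hy hrec hn

end RescaledRecurrence

-- The exponent is an integer so that the rescaled recurrence also holds at `n = 1`.
noncomputable def qPIRescaled (q : ℝ) (a : ℕ → ℝ) (n : ℕ) : ℝ := a n ^ 2 / q ^ ((n : ℤ) - 1)

section qPIRescaled

variable {q : ℝ} {a : ℕ → ℝ}

lemma qPIRescaled_nonneg (hq : 0 ≤ q) (n : ℕ) : 0 ≤ qPIRescaled q a n :=
  div_nonneg (sq_nonneg _) (zpow_nonneg hq _)

lemma qPIRescaled_of_one_le {n : ℕ} (hn : 1 ≤ n) : qPIRescaled q a n = a n ^ 2 / q ^ (n - 1) := by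
  rw [qPIRescaled, ← Nat.cast_one, ← Nat.cast_sub hn, zpow_natCast]

lemma qPIRescaled_rec (hq : q ≠ 0) {n : ℕ} (hn : 1 ≤ n)
    (h : q ^ (n - 1) * (1 - q ^ n)
        = (a n) ^ 2 * ((a (n + 1)) ^ 2 + q ^ (1 - (n : ℤ)) * (a n) ^ 2
          + q ^ 2 * (a (n - 1)) ^ 2
          + q ^ (3 - 2 * (n : ℤ)) * (a (n + 1)) ^ 2 * (a n) ^ 2 * (a (n - 1)) ^ 2)) :
    q ^ n * ((1 + qPIRescaled q a (n + 1) * qPIRescaled q a n)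
      * (1 + qPIRescaled q a (n - 1) * qPIRescaled q a n)) = 1 - qPIRescaled q a n ^ 2 := by
  obtain ⟨m, rfl⟩ := Nat.exists_eq_add_of_le' hn
  simp only [qPIRescaled, Nat.add_sub_cancel] at h ⊢
  push_cast at h ⊢
  simp only [zpow_sub₀ hq, zpow_add₀ hq, zpow_natCast, zpow_ofNat, mul_comm (2 : ℤ), zpow_mul]
    at h ⊢
  field_simp at h ⊢
  linear_combination (-(q * q ^ m)) * h

lemma sq_le_pow_of_qPIRescaled_le_one {n : ℕ} (hq : 0 < q) (hn : 1 ≤ n)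
    (hy : qPIRescaled q a n ≤ 1) : a n ^ 2 ≤ q ^ (n - 1) := by
  rwa [qPIRescaled_of_one_le hn, div_le_one (pow_pos hq _)] at hy

lemma pow_four_le_of_sq_qPIRescaled_le {n : ℕ} (hq : 0 < q) (hn : 1 ≤ n) {c : ℝ}
    (h : qPIRescaled q a n ^ 2 ≤ c) : a n ^ 4 ≤ q ^ (2 * n - 2) * c := by
  rw [qPIRescaled_of_one_le hn, div_pow, div_le_iff₀ (by positivity)] at h
  calc a n ^ 4 = (a n ^ 2) ^ 2 := by ring
    _ ≤ c * (q ^ (n - 1)) ^ 2 := h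
    _ = q ^ (2 * n - 2) * c := by rw [← pow_mul, mul_comm, Nat.sub_mul, mul_comm n]

end qPIRescaled

theorem qPI_asymptotics_general (q : ℝ) (hq0 : 0 < q) (hq1 : q < 1)
    (a : ℕ → ℝ)
    (hrec : ∀ n : ℕ, 1 ≤ n →
      q ^ (n - 1) * (1 - q ^ n)
        = (a n) ^ 2 * ((a (n + 1)) ^ 2 + q ^ (1 - (n : ℤ)) * (a n) ^ 2
          + q ^ 2 * (a (n - 1)) ^ 2
          + q ^ (3 - 2 * (n : ℤ)) * (a (n + 1)) ^ 2 * (a n) ^ 2 * (a (n - 1)) ^ 2)) :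
    (∀ n : ℕ, 1 ≤ n → (a n) ^ 4 ≤ q ^ (2 * n - 2) * (1 - q ^ n)) ∧
    Tendsto (fun n : ℕ => a n) atTop (𝓝 0) ∧
    Tendsto (fun n : ℕ => (a n) ^ 2 / q ^ (n - 1)) atTop (𝓝 1) := by
  have hy := qPIRescaled_nonneg (a := a) hq0.le
  have hrec' n hn := qPIRescaled_rec hq0.ne' hn (hrec n hn)
  refine ⟨fun n hn => ?_, ?_, ?_⟩
  · exact pow_four_le_of_sq_qPIRescaled_le hq0 hn
      (sq_le_one_sub_pow_of_rescaled_rec hq0.le hy hrec' hn)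
  · refine tendsto_zero_of_sq_le_pow (k := 1) hq0.le hq1 fun n hn => ?_
    exact sq_le_pow_of_qPIRescaled_le_one hq0 hn (le_one_of_rescaled_rec hq0.le hy hrec' hn)
  · refine (tendsto_one_of_rescaled_rec hq0.le hy hrec' hq1).congr' ?_
    filter_upwards [eventually_ge_atTop 1] with n hn
    exact qPIRescaled_of_one_le hn

/-- Asymptotics for positive solutions of the `q`-discrete Painlevé I equation
for the discrete `q`-Freud weight: `aₙ⁴ ≤ q^{2n-2}(1 - qⁿ)`, `aₙ → 0`, and
`aₙ²/q^{n-1} → 1`. -/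
theorem qPI_asymptotics (q : ℝ) (hq0 : 0 < q) (hq1 : q < 1)
    (a : ℕ → ℝ)
    (ha0 : a 0 = 0)
    (hapos : ∀ n, 1 ≤ n → 0 < a n)
    (hrec : ∀ n : ℕ, 1 ≤ n →
      q ^ (n - 1) * (1 - q ^ n)
        = (a n) ^ 2 * ((a (n + 1)) ^ 2 + q ^ (1 - (n : ℤ)) * (a n) ^ 2
          + q ^ 2 * (a (n - 1)) ^ 2
          + q ^ (3 - 2 * (n : ℤ)) * (a (n + 1)) ^ 2 * (a n) ^ 2 * (a (n - 1)) ^ 2)) :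
    (∀ n : ℕ, 1 ≤ n → (a n) ^ 4 ≤ q ^ (2 * n - 2) * (1 - q ^ n)) ∧
    Tendsto (fun n : ℕ => a n) atTop (𝓝 0) ∧
    Tendsto (fun n : ℕ => (a n) ^ 2 / q ^ (n - 1)) atTop (𝓝 1) :=
  qPI_asymptotics_general q hq0 hq1 a hrec
end
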